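/- There exists a constant c > 0 such that for every real ρ ≥ 1 the following holds. Let R be an axis-aligned rectangle of aspect ratio at most ρ, and let F be a finite family of cells whose interiors are pairwise disjoint, such that for every cell C = r_out \ r_in in F: r_out has aspect ratio at most 3; if r_in ≠ ∅ then r_in has aspect ratio at most 3 and is sticky in r_out; and R crosses C. Then the cardinality of F is at most c·ρ. -/
import Mathlib


/-- The box `[x1,x2] × [y1,y2] ⊆ ℝ²`. -/
def Rect (x1 x2 y1 y2 : ℝ) : Set (ℝ × ℝ) := Set.Icc x1 x2 ×ˢ Set.Icc y1 y2

/-- The four corners of the rectangle `[x1,x2] × [y1,y2]`. -/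
def Corners (x1 x2 y1 y2 : ℝ) : Set (ℝ × ℝ) :=
  {(x1, y1), (x1, y2), (x2, y1), (x2, y2)}

/-- The aspect ratio of a rectangle of width `w` and height `h`. -/
noncomputable def aspectRatio (w h : ℝ) : ℝ := max w h / min w h

/-- `[a1,b1] × [a2,b2]` is sticky in `[A1,B1] × [A2,B2]`: each of the four
gaps is either `0` or at least the corresponding side length of the inner
rectangle. -/
def Sticky (A1 B1 A2 B2 a1 b1 a2 b2 : ℝ) : Prop :=
  (a1 - A1 = 0 ∨ b1 - a1 ≤ a1 - A1) ∧ (B1 - b1 = 0 ∨ b1 - a1 ≤ B1 - b1) ∧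
  (a2 - A2 = 0 ∨ b2 - a2 ≤ a2 - A2) ∧ (B2 - b2 = 0 ∨ b2 - a2 ≤ B2 - b2)

/-- The rectangle `R = [X1,X2] × [Y1,Y2]` crosses the cell `C` with vertex set
`V`: they intersect, no corner of `R` lies in `C`, and `R` contains no vertex
of `C`. -/
def Crosses (X1 X2 Y1 Y2 : ℝ) (C V : Set (ℝ × ℝ)) : Prop :=
  (C ∩ Rect X1 X2 Y1 Y2).Nonempty ∧
  (∀ q ∈ Corners X1 X2 Y1 Y2, q ∉ C) ∧
  (∀ v ∈ V, v ∉ Rect X1 X2 Y1 Y2)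


set_option linter.unusedVariables false
set_option maxHeartbeats 1000000

open MeasureTheory ENNReal NNReal

section Aux

lemma mem_Rect {p : ℝ × ℝ} {x1 x2 y1 y2 : ℝ} :
    p ∈ Rect x1 x2 y1 y2 ↔ x1 ≤ p.1 ∧ p.1 ≤ x2 ∧ y1 ≤ p.2 ∧ p.2 ≤ y2 := by
  rw [Rect, Set.mem_prod, Set.mem_Icc, Set.mem_Icc]
  tauto

lemma aspect_both {w h r : ℝ} (hw : 0 < w) (hh : 0 < h) (hr : aspectRatio w h ≤ r) :
    h ≤ r * w ∧ w ≤ r * h := by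
  have hmin : 0 < min w h := lt_min hw hh
  rw [aspectRatio, div_le_iff₀ hmin] at hr
  have h1 : h ≤ max w h := le_max_right w h
  have h2 : w ≤ max w h := le_max_left w h
  have h3 : min w h ≤ w := min_le_left w h
  have h4 : min w h ≤ h := min_le_right w h
  have hr0 : 0 < r := by nlinarith
  constructor <;> nlinarith

lemma box_subset_interior_rect {u1 u2 v1 v2 A1 B1 A2 B2 : ℝ}
    (h1 : A1 ≤ u1) (h2 : u2 ≤ B1) (h3 : A2 ≤ v1) (h4 : v2 ≤ B2) :
    Set.Ioo u1 u2 ×ˢ Set.Ioo v1 v2 ⊆ interior (Rect A1 B1 A2 B2) := by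
  rw [Rect, interior_prod_eq, interior_Icc, interior_Icc]
  exact Set.prod_mono (Set.Ioo_subset_Ioo h1 h2) (Set.Ioo_subset_Ioo h3 h4)

lemma box_subset_rect {u1 u2 v1 v2 X1 X2 Y1 Y2 : ℝ}
    (h1 : X1 ≤ u1) (h2 : u2 ≤ X2) (h3 : Y1 ≤ v1) (h4 : v2 ≤ Y2) :
    Set.Ioo u1 u2 ×ˢ Set.Ioo v1 v2 ⊆ Rect X1 X2 Y1 Y2 :=
  Set.prod_mono (Set.Ioo_subset_Icc_self.trans (Set.Icc_subset_Icc h1 h2))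
    (Set.Ioo_subset_Icc_self.trans (Set.Icc_subset_Icc h3 h4))

lemma isClosed_Rect {x1 x2 y1 y2 : ℝ} : IsClosed (Rect x1 x2 y1 y2) := by
  rw [Rect]; exact isClosed_Icc.prod isClosed_Icc

lemma box_subset_interior_diff {u1 u2 v1 v2 A1 B1 A2 B2 a1 b1 a2 b2 : ℝ}
    (h1 : A1 ≤ u1) (h2 : u2 ≤ B1) (h3 : A2 ≤ v1) (h4 : v2 ≤ B2)
    (hd : u2 ≤ a1 ∨ b1 ≤ u1 ∨ v2 ≤ a2 ∨ b2 ≤ v1) :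
    Set.Ioo u1 u2 ×ˢ Set.Ioo v1 v2 ⊆
      interior (Rect A1 B1 A2 B2 \ Rect a1 b1 a2 b2) := by
  have hopen : IsOpen (interior (Rect A1 B1 A2 B2) \ Rect a1 b1 a2 b2) :=
    isOpen_interior.sdiff isClosed_Rect
  refine subset_trans ?_
    (interior_maximal (Set.diff_subset_diff_left interior_subset) hopen)
  intro p hp
  refine ⟨box_subset_interior_rect h1 h2 h3 h4 hp, ?_⟩
  intro hq
  rw [mem_Rect] at hq
  obtain ⟨hpx, hpy⟩ := hp
  rw [Set.mem_Ioo] at hpx hpy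
  rcases hd with h | h | h | h
  · linarith [hq.1, hpx.2]
  · linarith [hq.2.1, hpx.1]
  · linarith [hq.2.2.1, hpy.2]
  · linarith [hq.2.2.2, hpy.1]


lemma plug_core {X1 X2 Y1 Y2 A1 B1 A2 B2 a1 b1 a2 b2 m : ℝ}
    (hm0 : 0 < m) (hmy : m ≤ Y2 - Y1)
    (hab1 : a1 < b1) (hi2 : b1 ≤ B1)
    (hq : b2 - a2 ≤ 3 * (b1 - a1))
    (hst1 : a1 - A1 = 0 ∨ b1 - a1 ≤ a1 - A1)
    (hPL : X1 ≤ A1) (hX2B1 : X2 ≤ B1)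
    (hIN1 : A2 < Y1) (hIN2 : Y2 < B2) (hYY : Y1 ≤ Y2)
    (hcX2Y1 : (A1 ≤ X2 ∧ X2 ≤ B1 ∧ A2 ≤ Y1 ∧ Y1 ≤ B2) →
      (a1 ≤ X2 ∧ X2 ≤ b1 ∧ a2 ≤ Y1 ∧ Y1 ≤ b2))
    (hcX2Y2 : (A1 ≤ X2 ∧ X2 ≤ B1 ∧ A2 ≤ Y2 ∧ Y2 ≤ B2) →
      (a1 ≤ X2 ∧ X2 ≤ b1 ∧ a2 ≤ Y2 ∧ Y2 ≤ b2))
    (hne : ∃ x y, A1 ≤ x ∧ x ≤ X2 ∧ Y1 ≤ y ∧ y ≤ Y2 ∧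
      ¬(a1 ≤ x ∧ x ≤ b1 ∧ a2 ≤ y ∧ y ≤ b2))
    (hA1X2 : A1 ≤ X2) :
    m / 3 ≤ a1 - A1 ∧ a1 ≤ X2 := by
  obtain ⟨x, y, hx1, hx2, hy1, hy2, hxq⟩ := hne
  have h1 := hcX2Y1 ⟨hA1X2, hX2B1, le_of_lt hIN1, by linarith⟩
  have h2 := hcX2Y2 ⟨hA1X2, hX2B1, by linarith, le_of_lt hIN2⟩
  obtain ⟨q1, q2, q3, _⟩ := h1
  obtain ⟨_, _, _, q4⟩ := h2
  have hA1a1 : A1 < a1 := by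
    by_contra h
    push_neg at h
    exact hxq ⟨by linarith, by linarith, by linarith, by linarith⟩
  have hs : b1 - a1 ≤ a1 - A1 := by
    rcases hst1 with h | h
    · linarith
    · exact h
  exact ⟨by linarith, q1⟩

lemma annulusH_core {X1 X2 Y1 Y2 A1 B1 A2 B2 a1 b1 a2 b2 m : ℝ}
    (hm0 : 0 < m) (hmy : m ≤ Y2 - Y1) (hYY : Y1 < Y2)
    (hAB1 : A1 < B1) (hab1 : a1 < b1) (hab2 : a2 < b2)
    (hi1 : A1 ≤ a1) (hi2 : b1 ≤ B1) (hi3 : A2 ≤ a2) (hi4 : b2 ≤ B2)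
    (hQ : B2 - A2 ≤ 3 * (B1 - A1))
    (hq : b2 - a2 ≤ 3 * (b1 - a1))
    (hst1 : a1 - A1 = 0 ∨ b1 - a1 ≤ a1 - A1)
    (hst2 : B1 - b1 = 0 ∨ b1 - a1 ≤ B1 - b1)
    (oA2Y2 : A2 ≤ Y2) (oY1B2 : Y1 ≤ B2)
    (hvA1A2 : ¬(X1 ≤ A1 ∧ A1 ≤ X2 ∧ Y1 ≤ A2 ∧ A2 ≤ Y2))
    (hvA1B2 : ¬(X1 ≤ A1 ∧ A1 ≤ X2 ∧ Y1 ≤ B2 ∧ B2 ≤ Y2))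
    (hva1a2 : ¬(X1 ≤ a1 ∧ a1 ≤ X2 ∧ Y1 ≤ a2 ∧ a2 ≤ Y2))
    (hva1b2 : ¬(X1 ≤ a1 ∧ a1 ≤ X2 ∧ Y1 ≤ b2 ∧ b2 ≤ Y2))
    (hne : ∃ x y, A1 ≤ x ∧ x ≤ B1 ∧ Y1 ≤ y ∧ y ≤ Y2 ∧
      ¬(a1 ≤ x ∧ x ≤ b1 ∧ a2 ≤ y ∧ y ≤ b2))
    (hHx1 : X1 ≤ A1) (hHx2 : B1 ≤ X2) :
    ∃ u1 u2 v1 v2 : ℝ, m / 3 ≤ u2 - u1 ∧ m / 3 ≤ v2 - v1 ∧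
      A1 ≤ u1 ∧ u2 ≤ B1 ∧ A2 ≤ v1 ∧ v2 ≤ B2 ∧
      X1 ≤ u1 ∧ u2 ≤ X2 ∧ Y1 ≤ v1 ∧ v2 ≤ Y2 ∧
      (u2 ≤ a1 ∨ b1 ≤ u1 ∨ v2 ≤ a2 ∨ b2 ≤ v1) := by
  have hA1X2 : A1 ≤ X2 := le_trans (le_of_lt hAB1) hHx2
  have hA2Y1 : A2 < Y1 := by
    by_contra h
    push_neg at h
    exact hvA1A2 ⟨hHx1, hA1X2, h, oA2Y2⟩
  have hY2B2 : Y2 < B2 := by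
    by_contra h
    push_neg at h
    exact hvA1B2 ⟨hHx1, hA1X2, oY1B2, h⟩
  have hXa1 : X1 ≤ a1 := le_trans hHx1 hi1
  have ha1X2 : a1 ≤ X2 := by linarith
  have ha2cases : a2 < Y1 ∨ Y2 < a2 := by
    by_contra h
    push_neg at h
    exact hva1a2 ⟨hXa1, ha1X2, h.1, h.2⟩
  have hb2cases : b2 < Y1 ∨ Y2 < b2 := by
    by_contra h
    push_neg at h
    exact hva1b2 ⟨hXa1, ha1X2, h.1, h.2⟩
  rcases ha2cases with ha2' | ha2'
  · rcases hb2cases with hb2' | hb2'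
    · exact ⟨A1, B1, Y1, Y2, by linarith, by linarith, le_refl _, le_refl _,
        le_of_lt hA2Y1, le_of_lt hY2B2, hHx1, hHx2, le_refl _, le_refl _,
        Or.inr (Or.inr (Or.inr (le_of_lt hb2')))⟩
    · obtain ⟨x, y, hx1, hx2, hy1, hy2, hxq⟩ := hne
      by_cases hA1a1 : A1 < a1
      · have hs : b1 - a1 ≤ a1 - A1 := by
          rcases hst1 with h | h
          · linarith
          · exact h
        exact ⟨A1, a1, Y1, Y2, by linarith, by linarith, le_refl _, by linarith,
          le_of_lt hA2Y1, le_of_lt hY2B2, hHx1, ha1X2, le_refl _, le_refl _,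
          Or.inl (le_refl _)⟩
      · push_neg at hA1a1
        have hb1B1 : b1 < B1 := by
          rcases lt_or_eq_of_le hi2 with h | h
          · exact h
          · exact absurd (⟨by linarith, by linarith, by linarith, by linarith⟩ :
              a1 ≤ x ∧ x ≤ b1 ∧ a2 ≤ y ∧ y ≤ b2) hxq
        have hs : b1 - a1 ≤ B1 - b1 := by
          rcases hst2 with h | h
          · linarith
          · exact h
        exact ⟨b1, B1, Y1, Y2, by linarith, by linarith, by linarith, le_refl _,
          le_of_lt hA2Y1, le_of_lt hY2B2, by linarith, hHx2, le_refl _, le_refl _,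
          Or.inr (Or.inl (le_refl _))⟩
  · exact ⟨A1, B1, Y1, Y2, by linarith, by linarith, le_refl _, le_refl _,
      le_of_lt hA2Y1, le_of_lt hY2B2, hHx1, hHx2, le_refl _, le_refl _,
      Or.inr (Or.inr (Or.inl (le_of_lt ha2')))⟩

lemma annulus_core {X1 X2 Y1 Y2 A1 B1 A2 B2 a1 b1 a2 b2 m : ℝ}
    (hm0 : 0 < m) (hmx : m ≤ X2 - X1) (hmy : m ≤ Y2 - Y1)
    (hX : X1 < X2) (hY : Y1 < Y2)
    (hAB1 : A1 < B1) (hAB2 : A2 < B2) (hab1 : a1 < b1) (hab2 : a2 < b2)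
    (hi1 : A1 ≤ a1) (hi2 : b1 ≤ B1) (hi3 : A2 ≤ a2) (hi4 : b2 ≤ B2)
    (hQ1 : B2 - A2 ≤ 3 * (B1 - A1)) (hQ2 : B1 - A1 ≤ 3 * (B2 - A2))
    (hq1 : b2 - a2 ≤ 3 * (b1 - a1)) (hq2 : b1 - a1 ≤ 3 * (b2 - a2))
    (hst1 : a1 - A1 = 0 ∨ b1 - a1 ≤ a1 - A1)
    (hst2 : B1 - b1 = 0 ∨ b1 - a1 ≤ B1 - b1)
    (hst3 : a2 - A2 = 0 ∨ b2 - a2 ≤ a2 - A2)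
    (hst4 : B2 - b2 = 0 ∨ b2 - a2 ≤ B2 - b2)
    (hne : ∃ x y, A1 ≤ x ∧ x ≤ B1 ∧ A2 ≤ y ∧ y ≤ B2 ∧
      ¬(a1 ≤ x ∧ x ≤ b1 ∧ a2 ≤ y ∧ y ≤ b2) ∧
      X1 ≤ x ∧ x ≤ X2 ∧ Y1 ≤ y ∧ y ≤ Y2)
    (hcX1Y1 : (A1 ≤ X1 ∧ X1 ≤ B1 ∧ A2 ≤ Y1 ∧ Y1 ≤ B2) →
      (a1 ≤ X1 ∧ X1 ≤ b1 ∧ a2 ≤ Y1 ∧ Y1 ≤ b2))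
    (hcX1Y2 : (A1 ≤ X1 ∧ X1 ≤ B1 ∧ A2 ≤ Y2 ∧ Y2 ≤ B2) →
      (a1 ≤ X1 ∧ X1 ≤ b1 ∧ a2 ≤ Y2 ∧ Y2 ≤ b2))
    (hcX2Y1 : (A1 ≤ X2 ∧ X2 ≤ B1 ∧ A2 ≤ Y1 ∧ Y1 ≤ B2) →
      (a1 ≤ X2 ∧ X2 ≤ b1 ∧ a2 ≤ Y1 ∧ Y1 ≤ b2))
    (hcX2Y2 : (A1 ≤ X2 ∧ X2 ≤ B1 ∧ A2 ≤ Y2 ∧ Y2 ≤ B2) →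
      (a1 ≤ X2 ∧ X2 ≤ b1 ∧ a2 ≤ Y2 ∧ Y2 ≤ b2))
    (hvA1A2 : ¬(X1 ≤ A1 ∧ A1 ≤ X2 ∧ Y1 ≤ A2 ∧ A2 ≤ Y2))
    (hvA1B2 : ¬(X1 ≤ A1 ∧ A1 ≤ X2 ∧ Y1 ≤ B2 ∧ B2 ≤ Y2))
    (hvB1A2 : ¬(X1 ≤ B1 ∧ B1 ≤ X2 ∧ Y1 ≤ A2 ∧ A2 ≤ Y2))
    (hvB1B2 : ¬(X1 ≤ B1 ∧ B1 ≤ X2 ∧ Y1 ≤ B2 ∧ B2 ≤ Y2))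
    (hva1a2 : ¬(X1 ≤ a1 ∧ a1 ≤ X2 ∧ Y1 ≤ a2 ∧ a2 ≤ Y2))
    (hva1b2 : ¬(X1 ≤ a1 ∧ a1 ≤ X2 ∧ Y1 ≤ b2 ∧ b2 ≤ Y2))
    (hvb1a2 : ¬(X1 ≤ b1 ∧ b1 ≤ X2 ∧ Y1 ≤ a2 ∧ a2 ≤ Y2))
    (hvb1b2 : ¬(X1 ≤ b1 ∧ b1 ≤ X2 ∧ Y1 ≤ b2 ∧ b2 ≤ Y2)) :
    ∃ u1 u2 v1 v2 : ℝ, m / 3 ≤ u2 - u1 ∧ m / 3 ≤ v2 - v1 ∧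
      A1 ≤ u1 ∧ u2 ≤ B1 ∧ A2 ≤ v1 ∧ v2 ≤ B2 ∧
      X1 ≤ u1 ∧ u2 ≤ X2 ∧ Y1 ≤ v1 ∧ v2 ≤ Y2 ∧
      (u2 ≤ a1 ∨ b1 ≤ u1 ∨ v2 ≤ a2 ∨ b2 ≤ v1) := by
  obtain ⟨x, y, hx1, hx2, hy1, hy2, hxq, hRx1, hRx2, hRy1, hRy2⟩ := hne
  have oA1X2 : A1 ≤ X2 := le_trans hx1 hRx2
  have oX1B1 : X1 ≤ B1 := le_trans hRx1 hx2
  have oA2Y2 : A2 ≤ Y2 := le_trans hy1 hRy2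
  have oY1B2 : Y1 ≤ B2 := le_trans hRy1 hy2
  by_cases hHx : X1 ≤ A1 ∧ B1 ≤ X2
  · exact annulusH_core hm0 hmy hY hAB1 hab1 hab2 hi1 hi2 hi3 hi4 hQ1 hq1 hst1 hst2
      oA2Y2 oY1B2 hvA1A2 hvA1B2 hva1a2 hva1b2
      ⟨x, y, hx1, hx2, hRy1, hRy2, hxq⟩ hHx.1 hHx.2
  by_cases hHy : Y1 ≤ A2 ∧ B2 ≤ Y2
  · obtain ⟨u1, u2, v1, v2, h1, h2, h3, h4, h5, h6, h7, h8, h9, h10, hd⟩ :=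
      annulusH_core (X1 := Y1) (X2 := Y2) (Y1 := X1) (Y2 := X2)
        (A1 := A2) (B1 := B2) (A2 := A1) (B2 := B1)
        (a1 := a2) (b1 := b2) (a2 := a1) (b2 := b1)
        hm0 hmx hX hAB2 hab2 hab1 hi3 hi4 hi1 hi2 hQ2 hq2 hst3 hst4
        oA1X2 oX1B1
        (fun h => hvA1A2 ⟨h.2.2.1, h.2.2.2, h.1, h.2.1⟩)
        (fun h => hvB1A2 ⟨h.2.2.1, h.2.2.2, h.1, h.2.1⟩)
        (fun h => hva1a2 ⟨h.2.2.1, h.2.2.2, h.1, h.2.1⟩)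
        (fun h => hvb1a2 ⟨h.2.2.1, h.2.2.2, h.1, h.2.1⟩)
        ⟨y, x, hy1, hy2, hRx1, hRx2, fun h => hxq ⟨h.2.2.1, h.2.2.2, h.1, h.2.1⟩⟩
        hHy.1 hHy.2
    refine ⟨v1, v2, u1, u2, h2, h1, h5, h6, h3, h4, h9, h10, h7, h8, ?_⟩
    rcases hd with h | h | h | h
    · exact Or.inr (Or.inr (Or.inl h))
    · exact Or.inr (Or.inr (Or.inr h))
    · exact Or.inl h
    · exact Or.inr (Or.inl h)
  · by_cases px : X1 ≤ A1
    · have hx2B : X2 < B1 := lt_of_not_ge fun h => hHx ⟨px, h⟩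
      by_cases py : Y1 ≤ A2
      · exact absurd ⟨px, oA1X2, py, oA2Y2⟩ hvA1A2
      · push_neg at py
        by_cases py2 : B2 ≤ Y2
        · exact absurd ⟨px, oA1X2, oY1B2, py2⟩ hvA1B2
        · push_neg at py2
          obtain ⟨w1, w2⟩ := plug_core (A1 := A1) (B1 := B1) hm0 hmy hab1 hi2 hq1 hst1
            px (le_of_lt hx2B) py py2 (le_of_lt hY) hcX2Y1 hcX2Y2
            ⟨x, y, hx1, hRx2, hRy1, hRy2, hxq⟩ oA1X2
          exact ⟨A1, a1, Y1, Y2, by linarith, by linarith, le_refl _, by linarith,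
            le_of_lt py, le_of_lt py2, px, w2, le_refl _, le_refl _, Or.inl (le_refl _)⟩
    · push_neg at px
      by_cases px2 : B1 ≤ X2
      · by_cases py : Y1 ≤ A2
        · exact absurd ⟨oX1B1, px2, py, oA2Y2⟩ hvB1A2
        · push_neg at py
          by_cases py2 : B2 ≤ Y2
          · exact absurd ⟨oX1B1, px2, oY1B2, py2⟩ hvB1B2
          · push_neg at py2
            obtain ⟨w1, w2⟩ := plug_core (X1 := -X2) (X2 := -X1) (Y1 := Y1) (Y2 := Y2)
              (A1 := -B1) (B1 := -A1) (A2 := A2) (B2 := B2)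
              (a1 := -b1) (b1 := -a1) (a2 := a2) (b2 := b2)
              hm0 hmy (by linarith) (by linarith) (by linarith)
              (by rcases hst2 with h | h
                  · exact Or.inl (by linarith)
                  · exact Or.inr (by linarith))
              (by linarith) (by linarith) py py2 (le_of_lt hY)
              (fun h => by
                obtain ⟨r1, r2, r3, r4⟩ := hcX1Y1 ⟨by linarith [h.2.1], by linarith [h.1],
                  h.2.2.1, h.2.2.2⟩
                exact ⟨by linarith, by linarith, r3, r4⟩)
              (fun h => by
                obtain ⟨r1, r2, r3, r4⟩ := hcX1Y2 ⟨by linarith [h.2.1], by linarith [h.1],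
                  h.2.2.1, h.2.2.2⟩
                exact ⟨by linarith, by linarith, r3, r4⟩)
              ⟨-x, y, by linarith, by linarith, hRy1, hRy2,
                fun h => hxq ⟨by linarith [h.2.1], by linarith [h.1], h.2.2.1, h.2.2.2⟩⟩
              (by linarith)
            exact ⟨b1, B1, Y1, Y2, by linarith, by linarith, by linarith, le_refl _,
              le_of_lt py, le_of_lt py2, by linarith, px2, le_refl _, le_refl _,
              Or.inr (Or.inl (le_refl _))⟩
      · push_neg at px2
        by_cases py : Y1 ≤ A2
        · have hy2B : Y2 < B2 := lt_of_not_ge fun h => hHy ⟨py, h⟩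
          obtain ⟨w1, w2⟩ := plug_core (X1 := Y1) (X2 := Y2) (Y1 := X1) (Y2 := X2)
            (A1 := A2) (B1 := B2) (A2 := A1) (B2 := B1)
            (a1 := a2) (b1 := b2) (a2 := a1) (b2 := b1)
            hm0 hmx hab2 hi4 hq2 hst3 py (le_of_lt hy2B) px px2 (le_of_lt hX)
            (fun h => by
              obtain ⟨r1, r2, r3, r4⟩ := hcX1Y2 ⟨h.2.2.1, h.2.2.2, h.1, h.2.1⟩
              exact ⟨r3, r4, r1, r2⟩)
            (fun h => by
              obtain ⟨r1, r2, r3, r4⟩ := hcX2Y2 ⟨h.2.2.1, h.2.2.2, h.1, h.2.1⟩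
              exact ⟨r3, r4, r1, r2⟩)
            ⟨y, x, hy1, hRy2, hRx1, hRx2,
              fun h => hxq ⟨h.2.2.1, h.2.2.2, h.1, h.2.1⟩⟩ oA2Y2
          exact ⟨X1, X2, A2, a2, by linarith, by linarith, le_of_lt px, le_of_lt px2,
            le_refl _, by linarith, le_refl _, le_refl _, py, w2,
            Or.inr (Or.inr (Or.inl (le_refl _)))⟩
        · push_neg at py
          by_cases py2 : B2 ≤ Y2
          · obtain ⟨w1, w2⟩ := plug_core (X1 := -Y2) (X2 := -Y1) (Y1 := X1) (Y2 := X2)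
              (A1 := -B2) (B1 := -A2) (A2 := A1) (B2 := B1)
              (a1 := -b2) (b1 := -a2) (a2 := a1) (b2 := b1)
              hm0 hmx (by linarith) (by linarith) (by linarith)
              (by rcases hst4 with h | h
                  · exact Or.inl (by linarith)
                  · exact Or.inr (by linarith))
              (by linarith) (by linarith) px px2 (le_of_lt hX)
              (fun h => by
                obtain ⟨r1, r2, r3, r4⟩ := hcX1Y1 ⟨h.2.2.1, h.2.2.2,
                  by linarith [h.2.1], by linarith [h.1]⟩
                exact ⟨by linarith, by linarith, r1, r2⟩)
              (fun h => by
                obtain ⟨r1, r2, r3, r4⟩ := hcX2Y1 ⟨h.2.2.1, h.2.2.2,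
                  by linarith [h.2.1], by linarith [h.1]⟩
                exact ⟨by linarith, by linarith, r1, r2⟩)
              ⟨-y, x, by linarith, by linarith, hRx1, hRx2,
                fun h => hxq ⟨h.2.2.1, h.2.2.2, by linarith [h.2.1], by linarith [h.1]⟩⟩
              (by linarith)
            exact ⟨X1, X2, b2, B2, by linarith, by linarith, le_of_lt px, le_of_lt px2,
              by linarith, le_refl _, le_refl _, le_refl _, by linarith, py2,
              Or.inr (Or.inr (Or.inr (le_refl _)))⟩
          · push_neg at py2
            exfalso
            obtain ⟨c1, c2, c3, c4⟩ := hcX1Y1 ⟨le_of_lt px, by linarith,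
              le_of_lt py, oY1B2⟩
            obtain ⟨d1, d2, d3, d4⟩ := hcX2Y2 ⟨oA1X2, le_of_lt px2,
              oA2Y2, le_of_lt py2⟩
            exact hxq ⟨by linarith, by linarith, by linarith, by linarith⟩


lemma plainH_core {X1 X2 Y1 Y2 A1 B1 A2 B2 m : ℝ}
    (hm0 : 0 < m) (hmy : m ≤ Y2 - Y1)
    (hAB1 : A1 < B1)
    (hQ : B2 - A2 ≤ 3 * (B1 - A1))
    (oA2Y2 : A2 ≤ Y2) (oY1B2 : Y1 ≤ B2)
    (hvA1A2 : ¬(X1 ≤ A1 ∧ A1 ≤ X2 ∧ Y1 ≤ A2 ∧ A2 ≤ Y2))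
    (hvA1B2 : ¬(X1 ≤ A1 ∧ A1 ≤ X2 ∧ Y1 ≤ B2 ∧ B2 ≤ Y2))
    (hHx1 : X1 ≤ A1) (hHx2 : B1 ≤ X2) :
    ∃ u1 u2 v1 v2 : ℝ, m / 3 ≤ u2 - u1 ∧ m / 3 ≤ v2 - v1 ∧
      A1 ≤ u1 ∧ u2 ≤ B1 ∧ A2 ≤ v1 ∧ v2 ≤ B2 ∧
      X1 ≤ u1 ∧ u2 ≤ X2 ∧ Y1 ≤ v1 ∧ v2 ≤ Y2 := by
  have hA1X2 : A1 ≤ X2 := le_trans (le_of_lt hAB1) hHx2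
  have hA2Y1 : A2 < Y1 := by
    by_contra h; push_neg at h
    exact hvA1A2 ⟨hHx1, hA1X2, h, oA2Y2⟩
  have hY2B2 : Y2 < B2 := by
    by_contra h; push_neg at h
    exact hvA1B2 ⟨hHx1, hA1X2, oY1B2, h⟩
  exact ⟨A1, B1, Y1, Y2, by linarith, by linarith, le_refl _, le_refl _,
    le_of_lt hA2Y1, le_of_lt hY2B2, hHx1, hHx2, le_refl _, le_refl _⟩

lemma plain_core {X1 X2 Y1 Y2 A1 B1 A2 B2 m : ℝ}
    (hm0 : 0 < m) (hmx : m ≤ X2 - X1) (hmy : m ≤ Y2 - Y1)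
    (hX : X1 < X2) (hY : Y1 < Y2) (hAB1 : A1 < B1) (hAB2 : A2 < B2)
    (hQ1 : B2 - A2 ≤ 3 * (B1 - A1)) (hQ2 : B1 - A1 ≤ 3 * (B2 - A2))
    (hne : ∃ x y, A1 ≤ x ∧ x ≤ B1 ∧ A2 ≤ y ∧ y ≤ B2 ∧
      X1 ≤ x ∧ x ≤ X2 ∧ Y1 ≤ y ∧ y ≤ Y2)
    (hcX1Y1 : ¬(A1 ≤ X1 ∧ X1 ≤ B1 ∧ A2 ≤ Y1 ∧ Y1 ≤ B2))
    (hcX1Y2 : ¬(A1 ≤ X1 ∧ X1 ≤ B1 ∧ A2 ≤ Y2 ∧ Y2 ≤ B2))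
    (hcX2Y1 : ¬(A1 ≤ X2 ∧ X2 ≤ B1 ∧ A2 ≤ Y1 ∧ Y1 ≤ B2))
    (hcX2Y2 : ¬(A1 ≤ X2 ∧ X2 ≤ B1 ∧ A2 ≤ Y2 ∧ Y2 ≤ B2))
    (hvA1A2 : ¬(X1 ≤ A1 ∧ A1 ≤ X2 ∧ Y1 ≤ A2 ∧ A2 ≤ Y2))
    (hvA1B2 : ¬(X1 ≤ A1 ∧ A1 ≤ X2 ∧ Y1 ≤ B2 ∧ B2 ≤ Y2))
    (hvB1A2 : ¬(X1 ≤ B1 ∧ B1 ≤ X2 ∧ Y1 ≤ A2 ∧ A2 ≤ Y2))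
    (hvB1B2 : ¬(X1 ≤ B1 ∧ B1 ≤ X2 ∧ Y1 ≤ B2 ∧ B2 ≤ Y2)) :
    ∃ u1 u2 v1 v2 : ℝ, m / 3 ≤ u2 - u1 ∧ m / 3 ≤ v2 - v1 ∧
      A1 ≤ u1 ∧ u2 ≤ B1 ∧ A2 ≤ v1 ∧ v2 ≤ B2 ∧
      X1 ≤ u1 ∧ u2 ≤ X2 ∧ Y1 ≤ v1 ∧ v2 ≤ Y2 := by
  obtain ⟨x, y, hx1, hx2, hy1, hy2, hRx1, hRx2, hRy1, hRy2⟩ := hne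
  have oA1X2 : A1 ≤ X2 := le_trans hx1 hRx2
  have oX1B1 : X1 ≤ B1 := le_trans hRx1 hx2
  have oA2Y2 : A2 ≤ Y2 := le_trans hy1 hRy2
  have oY1B2 : Y1 ≤ B2 := le_trans hRy1 hy2
  by_cases hHx : X1 ≤ A1 ∧ B1 ≤ X2
  · exact plainH_core hm0 hmy hAB1 hQ1 oA2Y2 oY1B2 hvA1A2 hvA1B2 hHx.1 hHx.2
  by_cases hHy : Y1 ≤ A2 ∧ B2 ≤ Y2
  · obtain ⟨u1, u2, v1, v2, h1, h2, h3, h4, h5, h6, h7, h8, h9, h10⟩ :=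
      plainH_core (X1 := Y1) (X2 := Y2) (Y1 := X1) (Y2 := X2)
        (A1 := A2) (B1 := B2) (A2 := A1) (B2 := B1)
        hm0 hmx hAB2 hQ2 oA1X2 oX1B1
        (fun h => hvA1A2 ⟨h.2.2.1, h.2.2.2, h.1, h.2.1⟩)
        (fun h => hvB1A2 ⟨h.2.2.1, h.2.2.2, h.1, h.2.1⟩)
        hHy.1 hHy.2
    exact ⟨v1, v2, u1, u2, h2, h1, h5, h6, h3, h4, h9, h10, h7, h8⟩
  · -- contradictions in all remaining cases
    exfalso
    by_cases px : X1 ≤ A1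
    · have hx2B : X2 < B1 := lt_of_not_ge fun h => hHx ⟨px, h⟩
      by_cases py : Y1 ≤ A2
      · exact hvA1A2 ⟨px, oA1X2, py, oA2Y2⟩
      · push_neg at py
        by_cases py2 : B2 ≤ Y2
        · exact hvA1B2 ⟨px, oA1X2, oY1B2, py2⟩
        · push_neg at py2
          exact hcX2Y1 ⟨oA1X2, le_of_lt hx2B, le_of_lt py, oY1B2⟩
    · push_neg at px
      by_cases px2 : B1 ≤ X2
      · by_cases py : Y1 ≤ A2
        · exact hvB1A2 ⟨oX1B1, px2, py, oA2Y2⟩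
        · push_neg at py
          by_cases py2 : B2 ≤ Y2
          · exact hvB1B2 ⟨oX1B1, px2, oY1B2, py2⟩
          · push_neg at py2
            exact hcX1Y1 ⟨le_of_lt px, oX1B1, le_of_lt py, oY1B2⟩
      · push_neg at px2
        by_cases py : Y1 ≤ A2
        · have hy2B : Y2 < B2 := lt_of_not_ge fun h => hHy ⟨py, h⟩
          exact hcX1Y2 ⟨le_of_lt px, by linarith, oA2Y2, le_of_lt hy2B⟩
        · push_neg at py
          exact hcX1Y1 ⟨le_of_lt px, by linarith, le_of_lt py, oY1B2⟩

lemma cell_box {X1 X2 Y1 Y2 : ℝ} (hX : X1 < X2) (hY : Y1 < Y2) (C : Set (ℝ × ℝ))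
    (hC : ∃ A1 B1 A2 B2 : ℝ, A1 < B1 ∧ A2 < B2 ∧
      aspectRatio (B1 - A1) (B2 - A2) ≤ 3 ∧
      ((C = Rect A1 B1 A2 B2 ∧
         Crosses X1 X2 Y1 Y2 C (Corners A1 B1 A2 B2)) ∨
       (∃ a1 b1 a2 b2 : ℝ, a1 < b1 ∧ a2 < b2 ∧
         A1 ≤ a1 ∧ b1 ≤ B1 ∧ A2 ≤ a2 ∧ b2 ≤ B2 ∧
         aspectRatio (b1 - a1) (b2 - a2) ≤ 3 ∧
         Sticky A1 B1 A2 B2 a1 b1 a2 b2 ∧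
         C = Rect A1 B1 A2 B2 \ Rect a1 b1 a2 b2 ∧
         Crosses X1 X2 Y1 Y2 C
           (Corners A1 B1 A2 B2 ∪ Corners a1 b1 a2 b2)))) :
    ∃ u1 u2 v1 v2 : ℝ,
      min (X2 - X1) (Y2 - Y1) / 3 ≤ u2 - u1 ∧
      min (X2 - X1) (Y2 - Y1) / 3 ≤ v2 - v1 ∧
      Set.Ioo u1 u2 ×ˢ Set.Ioo v1 v2 ⊆ interior C ∧
      Set.Ioo u1 u2 ×ˢ Set.Ioo v1 v2 ⊆ Rect X1 X2 Y1 Y2 := by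
  set m : ℝ := min (X2 - X1) (Y2 - Y1) with hm
  have hm0 : 0 < m := lt_min (by linarith) (by linarith)
  have hmx : m ≤ X2 - X1 := min_le_left _ _
  have hmy : m ≤ Y2 - Y1 := min_le_right _ _
  obtain ⟨A1, B1, A2, B2, hAB1, hAB2, haspQ, hcase⟩ := hC
  obtain ⟨hQ1, hQ2⟩ := aspect_both (by linarith) (by linarith) haspQ
  rcases hcase with ⟨hCeq, hcr⟩ | ⟨a1, b1, a2, b2, hab1, hab2, hi1, hi2, hi3, hi4,
      haspq, hsticky, hCeq, hcr⟩
  · subst hCeq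
    obtain ⟨⟨p, hpC, hpR⟩, hcor, hver⟩ := hcr
    rw [mem_Rect] at hpC hpR
    have c11 : ¬(A1 ≤ X1 ∧ X1 ≤ B1 ∧ A2 ≤ Y1 ∧ Y1 ≤ B2) :=
      fun h => hcor (X1, Y1) (by simp [Corners]) (mem_Rect.mpr h)
    have c12 : ¬(A1 ≤ X1 ∧ X1 ≤ B1 ∧ A2 ≤ Y2 ∧ Y2 ≤ B2) :=
      fun h => hcor (X1, Y2) (by simp [Corners]) (mem_Rect.mpr h)
    have c21 : ¬(A1 ≤ X2 ∧ X2 ≤ B1 ∧ A2 ≤ Y1 ∧ Y1 ≤ B2) :=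
      fun h => hcor (X2, Y1) (by simp [Corners]) (mem_Rect.mpr h)
    have c22 : ¬(A1 ≤ X2 ∧ X2 ≤ B1 ∧ A2 ≤ Y2 ∧ Y2 ≤ B2) :=
      fun h => hcor (X2, Y2) (by simp [Corners]) (mem_Rect.mpr h)
    have v11 : ¬(X1 ≤ A1 ∧ A1 ≤ X2 ∧ Y1 ≤ A2 ∧ A2 ≤ Y2) :=
      fun h => hver (A1, A2) (by simp [Corners]) (mem_Rect.mpr h)
    have v12 : ¬(X1 ≤ A1 ∧ A1 ≤ X2 ∧ Y1 ≤ B2 ∧ B2 ≤ Y2) :=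
      fun h => hver (A1, B2) (by simp [Corners]) (mem_Rect.mpr h)
    have v21 : ¬(X1 ≤ B1 ∧ B1 ≤ X2 ∧ Y1 ≤ A2 ∧ A2 ≤ Y2) :=
      fun h => hver (B1, A2) (by simp [Corners]) (mem_Rect.mpr h)
    have v22 : ¬(X1 ≤ B1 ∧ B1 ≤ X2 ∧ Y1 ≤ B2 ∧ B2 ≤ Y2) :=
      fun h => hver (B1, B2) (by simp [Corners]) (mem_Rect.mpr h)
    obtain ⟨u1, u2, v1, v2, hw1, hw2, b1', b2', b3', b4', r1, r2, r3, r4⟩ :=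
      plain_core hm0 hmx hmy hX hY hAB1 hAB2 hQ1 hQ2
        ⟨p.1, p.2, hpC.1, hpC.2.1, hpC.2.2.1, hpC.2.2.2,
          hpR.1, hpR.2.1, hpR.2.2.1, hpR.2.2.2⟩
        c11 c12 c21 c22 v11 v12 v21 v22
    exact ⟨u1, u2, v1, v2, hw1, hw2,
      box_subset_interior_rect b1' b2' b3' b4', box_subset_rect r1 r2 r3 r4⟩
  · subst hCeq
    obtain ⟨hq1, hq2⟩ := aspect_both (by linarith) (by linarith) haspq
    obtain ⟨hst1, hst2, hst3, hst4⟩ := hsticky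
    obtain ⟨⟨p, hpC, hpR⟩, hcor, hver⟩ := hcr
    obtain ⟨hpQ, hpq⟩ := hpC
    rw [mem_Rect] at hpQ hpR
    have hpq' : ¬(a1 ≤ p.1 ∧ p.1 ≤ b1 ∧ a2 ≤ p.2 ∧ p.2 ≤ b2) :=
      fun h => hpq (mem_Rect.mpr h)
    have mkc : ∀ x y : ℝ, (x, y) ∉ Rect A1 B1 A2 B2 \ Rect a1 b1 a2 b2 →
        (A1 ≤ x ∧ x ≤ B1 ∧ A2 ≤ y ∧ y ≤ B2) → (a1 ≤ x ∧ x ≤ b1 ∧ a2 ≤ y ∧ y ≤ b2) := by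
      intro x y hn h
      by_contra hq'
      exact hn ⟨mem_Rect.mpr h, fun hh => hq' (mem_Rect.mp hh)⟩
    have c11 := mkc X1 Y1 (hcor (X1, Y1) (by simp [Corners]))
    have c12 := mkc X1 Y2 (hcor (X1, Y2) (by simp [Corners]))
    have c21 := mkc X2 Y1 (hcor (X2, Y1) (by simp [Corners]))
    have c22 := mkc X2 Y2 (hcor (X2, Y2) (by simp [Corners]))
    have mkv : ∀ x y : ℝ, (x, y) ∉ Rect X1 X2 Y1 Y2 →
        ¬(X1 ≤ x ∧ x ≤ X2 ∧ Y1 ≤ y ∧ y ≤ Y2) :=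
      fun x y hn h => hn (mem_Rect.mpr h)
    have v11 := mkv A1 A2 (hver (A1, A2) (by simp [Corners]))
    have v12 := mkv A1 B2 (hver (A1, B2) (by simp [Corners]))
    have v21 := mkv B1 A2 (hver (B1, A2) (by simp [Corners]))
    have v22 := mkv B1 B2 (hver (B1, B2) (by simp [Corners]))
    have w11 := mkv a1 a2 (hver (a1, a2) (by simp [Corners]))
    have w12 := mkv a1 b2 (hver (a1, b2) (by simp [Corners]))
    have w21 := mkv b1 a2 (hver (b1, a2) (by simp [Corners]))
    have w22 := mkv b1 b2 (hver (b1, b2) (by simp [Corners]))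
    obtain ⟨u1, u2, v1, v2, hw1, hw2, b1', b2', b3', b4', r1, r2, r3, r4, hd⟩ :=
      annulus_core hm0 hmx hmy hX hY hAB1 hAB2 hab1 hab2 hi1 hi2 hi3 hi4
        hQ1 hQ2 hq1 hq2 hst1 hst2 hst3 hst4
        ⟨p.1, p.2, hpQ.1, hpQ.2.1, hpQ.2.2.1, hpQ.2.2.2, hpq',
          hpR.1, hpR.2.1, hpR.2.2.1, hpR.2.2.2⟩
        c11 c12 c21 c22 v11 v12 v21 v22 w11 w12 w21 w22
    exact ⟨u1, u2, v1, v2, hw1, hw2,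
      box_subset_interior_diff b1' b2' b3' b4' hd, box_subset_rect r1 r2 r3 r4⟩

end Aux

theorem crossed_cells_bound :
    ∃ c : ℝ, 0 < c ∧ ∀ ρ : ℝ, 1 ≤ ρ →
      -- `R = [X1,X2] × [Y1,Y2]` is an axis-aligned rectangle of aspect ratio at most `ρ`
      ∀ X1 X2 Y1 Y2 : ℝ, X1 < X2 → Y1 < Y2 →
        aspectRatio (X2 - X1) (Y2 - Y1) ≤ ρ →
        ∀ F : Finset (Set (ℝ × ℝ)),
          -- every member of `F` is a cell `r_out \ r_in` with `r_out` (and `r_in`, if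
          -- nonempty) of aspect ratio at most 3, `r_in` sticky in `r_out`, crossed by `R`
          (∀ C ∈ F, ∃ A1 B1 A2 B2 : ℝ, A1 < B1 ∧ A2 < B2 ∧
            aspectRatio (B1 - A1) (B2 - A2) ≤ 3 ∧
            ((C = Rect A1 B1 A2 B2 ∧
               Crosses X1 X2 Y1 Y2 C (Corners A1 B1 A2 B2)) ∨
             (∃ a1 b1 a2 b2 : ℝ, a1 < b1 ∧ a2 < b2 ∧
               A1 ≤ a1 ∧ b1 ≤ B1 ∧ A2 ≤ a2 ∧ b2 ≤ B2 ∧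
               aspectRatio (b1 - a1) (b2 - a2) ≤ 3 ∧
               Sticky A1 B1 A2 B2 a1 b1 a2 b2 ∧
               C = Rect A1 B1 A2 B2 \ Rect a1 b1 a2 b2 ∧
               Crosses X1 X2 Y1 Y2 C
                 (Corners A1 B1 A2 B2 ∪ Corners a1 b1 a2 b2)))) →
          -- the interiors of the cells are pairwise disjoint
          (∀ C ∈ F, ∀ C' ∈ F, C ≠ C' → interior C ∩ interior C' = ∅) →
          (F.card : ℝ) ≤ c * ρ := by
  refine ⟨9, by norm_num, ?_⟩
  intro ρ hρ X1 X2 Y1 Y2 hX hY hasp F hF hdisj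
  classical
  set m : ℝ := min (X2 - X1) (Y2 - Y1) with hm
  have hm0 : 0 < m := lt_min (by linarith) (by linarith)
  have hmx : m ≤ X2 - X1 := min_le_left _ _
  have hmy : m ≤ Y2 - Y1 := min_le_right _ _
  -- choose a box inside each cell
  have key : ∀ C ∈ F, ∃ u1 u2 v1 v2 : ℝ,
      m / 3 ≤ u2 - u1 ∧ m / 3 ≤ v2 - v1 ∧
      Set.Ioo u1 u2 ×ˢ Set.Ioo v1 v2 ⊆ interior C ∧
      Set.Ioo u1 u2 ×ˢ Set.Ioo v1 v2 ⊆ Rect X1 X2 Y1 Y2 :=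
    fun C hC => cell_box hX hY C (hF C hC)
  choose! u1f u2f v1f v2f hb1 hb2 hb3 hb4 using key
  set S : Set (ℝ × ℝ) → Set (ℝ × ℝ) :=
    fun C => Set.Ioo (u1f C) (u2f C) ×ˢ Set.Ioo (v1f C) (v2f C) with hS
  have hSmeas : ∀ C ∈ F, MeasurableSet (S C) :=
    fun C _ => measurableSet_Ioo.prod measurableSet_Ioo
  have hSdisj : (↑F : Set (Set (ℝ × ℝ))).PairwiseDisjoint S := by
    intro C hC C' hC' hne
    rw [Function.onFun]
    rw [Set.disjoint_iff_inter_eq_empty]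
    apply Set.eq_empty_of_subset_empty
    calc S C ∩ S C' ⊆ interior C ∩ interior C' :=
          Set.inter_subset_inter (hb3 C hC) (hb3 C' hC')
      _ = ∅ := hdisj C hC C' hC' hne
  have hvolS : ∀ C ∈ F, ENNReal.ofReal (m / 3 * (m / 3)) ≤ volume (S C) := by
    intro C hC
    have : volume (S C) = ENNReal.ofReal (u2f C - u1f C) *
        ENNReal.ofReal (v2f C - v1f C) := by
      rw [hS]
      rw [MeasureTheory.Measure.volume_eq_prod, MeasureTheory.Measure.prod_prod,
        Real.volume_Ioo, Real.volume_Ioo]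
    rw [this, ENNReal.ofReal_mul (by linarith : (0:ℝ) ≤ m / 3)]
    exact mul_le_mul' (ENNReal.ofReal_le_ofReal (hb1 C hC))
      (ENNReal.ofReal_le_ofReal (hb2 C hC))
  have hunion : (⋃ C ∈ F, S C) ⊆ Rect X1 X2 Y1 Y2 :=
    Set.iUnion₂_subset fun C hC => hb4 C hC
  have hsum : ∑ C ∈ F, volume (S C) = volume (⋃ C ∈ F, S C) :=
    (measure_biUnion_finset hSdisj hSmeas).symm
  have hRvol : volume (Rect X1 X2 Y1 Y2) =
      ENNReal.ofReal ((X2 - X1) * (Y2 - Y1)) := by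
    rw [Rect, MeasureTheory.Measure.volume_eq_prod, MeasureTheory.Measure.prod_prod,
      Real.volume_Icc, Real.volume_Icc, ← ENNReal.ofReal_mul (by linarith)]
  have hcount : (F.card : ℝ≥0∞) * ENNReal.ofReal (m / 3 * (m / 3)) ≤
      ENNReal.ofReal ((X2 - X1) * (Y2 - Y1)) := by
    have h1 : ∑ _C ∈ F, ENNReal.ofReal (m / 3 * (m / 3)) ≤ ∑ C ∈ F, volume (S C) :=
      Finset.sum_le_sum hvolS
    rw [Finset.sum_const, nsmul_eq_mul] at h1
    refine le_trans h1 (le_trans (le_of_eq hsum)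
      (le_trans (measure_mono hunion) (le_of_eq hRvol)))
  have hcount' : (F.card : ℝ) * (m / 3 * (m / 3)) ≤ (X2 - X1) * (Y2 - Y1) := by
    have := hcount
    rw [← ENNReal.ofReal_natCast F.card,
      ← ENNReal.ofReal_mul (by positivity : (0:ℝ) ≤ (F.card : ℝ))] at this
    exact (ENNReal.ofReal_le_ofReal_iff (by nlinarith)).mp this
  -- aspect ratio of R
  obtain ⟨ha1, ha2⟩ := aspect_both (by linarith : (0:ℝ) < X2 - X1)
    (by linarith : (0:ℝ) < Y2 - Y1) hasp
  have hwh : (X2 - X1) * (Y2 - Y1) ≤ ρ * (m * m) := by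
    rcases le_total (X2 - X1) (Y2 - Y1) with h | h
    · have : m = X2 - X1 := min_eq_left h
      rw [this]
      nlinarith
    · have : m = Y2 - Y1 := min_eq_right h
      rw [this]
      nlinarith
  nlinarith [hm0, mul_pos hm0 hm0]
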